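/- Let Λ be a finite abelian subgroup of (ℝ/ℤ)^{2^{r+2}−1} with wt(y) ≤ 2^{r+1} for all y ∈ Λ. If x_1, …, x_{r+2} ∈ Λ are such that the (r+2) × (2^{r+2}−1) matrix A whose rows are x_1, …, x_{r+2} has support matrix equal to A(r+2) (i.e., A_{ij} ≠ 0 in ℝ/ℤ iff A(r+2)_{ij} = 1), then every entry of A lies in {0, 1/2}, so A = M(r+2). -/

import Mathlib

/-- The column index set of `A(r)`: the nonzero vectors of `𝔽₂^r`. -/
def Col (r : ℕ) : Type := {v : Fin r → ZMod 2 // v ≠ 0}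

noncomputable instance (r : ℕ) : Fintype (Col r) := by unfold Col; infer_instance

/-- `wt y`: the number of nonzero coordinates. -/
noncomputable def wt {r : ℕ} (y : Col r → AddCircle (1 : ℝ)) : ℕ :=
  Nat.card {c : Col r // y c ≠ 0}

/-!
An element of `Λ` has weight at most `2 ^ (r + 1)`, which is exactly the number of columns on
which a nonzero linear form `φ` on `𝔽₂^(r+2)` takes the value `1`; so an element of `Λ` that is
nonzero on all of those columns vanishes on every other one. For `x i ± x j` and
`φ c = c i + c j` this gives `2 • x i c = 0` whenever `c i = c j = 1`; then `2 • x i + x j` and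
`φ c = c j` give `2 • x i c = 0` on the remaining columns with `c i = 1`. The only nonzero
`2`-torsion point of `ℝ/ℤ` is `1/2`.
-/

open Finset

lemma ZMod.two_ne_one_iff {a : ZMod 2} : a ≠ 1 ↔ a = 0 := by decide +revert

lemma ZMod.two_add_eq_one_iff {a b : ZMod 2} : a + b = 1 ↔ a = 1 ∧ b = 0 ∨ a = 0 ∧ b = 1 := by
  decide +revert

lemma AddCircle.eq_half_of_add_self_eq_zero {a : AddCircle (1 : ℝ)} (h2 : a + a = 0)
    (h0 : a ≠ 0) : a = (((1 : ℝ) / 2 : ℝ) : AddCircle (1 : ℝ)) := by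
  rw [← two_nsmul, AddCircle.nsmul_eq_zero_iff two_pos] at h2
  obtain ⟨m, hm, rfl⟩ := h2
  interval_cases m
  · simp at h0
  · simp

lemma wt_eq_ncard_support {r : ℕ} (y : Col r → AddCircle (1 : ℝ)) :
    wt y = (Function.support y).ncard :=
  Nat.card_coe_set_eq _

lemma card_filter_eq_one_of_mem_range {n : ℕ} (φ : (Fin (n + 1) → ZMod 2) →+ ZMod 2)
    (hφ : 1 ∈ Set.range φ) : #{v | φ v = 1} = 2 ^ n := by
  have hfibers : #{v | φ v = 1} = #{v | φ v = 0} :=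
    AddMonoidHom.card_fiber_eq_of_mem_range φ hφ ⟨0, map_zero φ⟩
  have htotal := Finset.card_filter_add_card_filter_not (s := univ) fun v => φ v = 1
  simp only [ZMod.two_ne_one_iff, card_univ, Fintype.card_fun, ZMod.card, Fintype.card_fin]
    at htotal
  rw [pow_succ] at htotal
  omega

lemma ncard_setOf_col_eq_one {n : ℕ} (φ : (Fin (n + 1) → ZMod 2) →+ ZMod 2)
    (hφ : 1 ∈ Set.range φ) : {c : Col (n + 1) | φ c.val = 1}.ncard = 2 ^ n := by
  have hsub : {v | φ v = 1} ⊆ Set.range (Subtype.val : Col (n + 1) → _) := fun v hv =>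
    ⟨⟨v, fun h0 => by simp [h0] at hv⟩, rfl⟩
  calc {c : Col (n + 1) | φ c.val = 1}.ncard
      = (Subtype.val ⁻¹' {v | φ v = 1} : Set (Col (n + 1))).ncard := rfl
    _ = {v | φ v = 1}.ncard :=
      Set.ncard_preimage_of_injective_subset_range Subtype.val_injective hsub
    _ = #{v | φ v = 1} := by rw [← Set.ncard_coe_finset, coe_filter_univ]
    _ = 2 ^ n := card_filter_eq_one_of_mem_range φ hφ

section Weight

variable {r : ℕ} {Λ : AddSubgroup (Col (r + 2) → AddCircle (1 : ℝ))}

lemma apply_eq_zero_of_ne_zero_on_fiber (hwt : ∀ y ∈ Λ, wt y ≤ 2 ^ (r + 1))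
    {y : Col (r + 2) → AddCircle (1 : ℝ)} (hy : y ∈ Λ) (φ : (Fin (r + 2) → ZMod 2) →+ ZMod 2)
    (hφ : 1 ∈ Set.range φ) (hne : ∀ d : Col (r + 2), φ d.val = 1 → y d ≠ 0)
    {c : Col (r + 2)} (hc : φ c.val ≠ 1) : y c = 0 := by
  have hle : (Function.support y).ncard ≤ {d : Col (r + 2) | φ d.val = 1}.ncard := by
    rw [ncard_setOf_col_eq_one φ hφ, ← wt_eq_ncard_support]
    exact hwt y hy
  have hsupp : {d | φ d.val = 1} = Function.support y := Set.eq_of_subset_of_ncard_le hne hle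
  exact Function.notMem_support.mp fun h => hc (hsupp.symm ▸ h :)

variable (hwt : ∀ y ∈ Λ, wt y ≤ 2 ^ (r + 1)) {x : Fin (r + 2) → Col (r + 2) → AddCircle (1 : ℝ)}
  (hxΛ : ∀ i, x i ∈ Λ) (hsupp : ∀ (i : Fin (r + 2)) (c : Col (r + 2)), x i c ≠ 0 ↔ c.val i = 1)
include hwt hxΛ hsupp

lemma add_self_eq_zero_of_two_ones {i j : Fin (r + 2)} (hij : i ≠ j) {c : Col (r + 2)}
    (hci : c.val i = 1) (hcj : c.val j = 1) : x i c + x i c = 0 := by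
  let φ := Pi.evalAddMonoidHom (fun _ => ZMod 2) i + Pi.evalAddMonoidHom (fun _ => ZMod 2) j
  have hφ : 1 ∈ Set.range φ := ⟨Pi.single i 1, by simp [φ, hij.symm]⟩
  have hc : φ c.val ≠ 1 := by simp [φ, hci, hcj]
  have hzero (k : Fin (r + 2)) (d : Col (r + 2)) : x k d = 0 ↔ d.val k = 0 :=
    (hsupp k d).not_right.trans ZMod.two_ne_one_iff
  have hplus : (x i + x j) c = 0 := by
    refine apply_eq_zero_of_ne_zero_on_fiber hwt (Λ.add_mem (hxΛ i) (hxΛ j)) φ hφ ?_ hc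
    intro d hd
    rcases ZMod.two_add_eq_one_iff.mp hd with ⟨hdi, hdj⟩ | ⟨hdi, hdj⟩
    · simpa [(hzero j d).mpr hdj] using (hsupp i d).mpr hdi
    · simpa [(hzero i d).mpr hdi] using (hsupp j d).mpr hdj
  have hminus : (x i - x j) c = 0 := by
    refine apply_eq_zero_of_ne_zero_on_fiber hwt (Λ.sub_mem (hxΛ i) (hxΛ j)) φ hφ ?_ hc
    intro d hd
    rcases ZMod.two_add_eq_one_iff.mp hd with ⟨hdi, hdj⟩ | ⟨hdi, hdj⟩
    · simpa [(hzero j d).mpr hdj] using (hsupp i d).mpr hdi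
    · simpa [(hzero i d).mpr hdi] using (hsupp j d).mpr hdj
  calc x i c + x i c = (x i + x j) c + (x i - x j) c := by
        simp only [Pi.add_apply, Pi.sub_apply]; abel
    _ = 0 := by rw [hplus, hminus, add_zero]

lemma add_self_eq_zero_on_support {i : Fin (r + 2)} {c : Col (r + 2)} (hci : c.val i = 1) :
    x i c + x i c = 0 := by
  obtain ⟨j, hji⟩ := Fintype.exists_ne_of_one_lt_card (by simp) i
  by_cases hcj : c.val j = 1
  · exact add_self_eq_zero_of_two_ones hwt hxΛ hsupp hji.symm hci hcj
  have hxj : x j c = 0 := (hsupp j c).not_right.mpr hcj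
  have hφ : 1 ∈ Set.range (Pi.evalAddMonoidHom (fun _ => ZMod 2) j) := ⟨Pi.single j 1, by simp⟩
  suffices (x i + x i + x j) c = 0 by simpa [hxj] using this
  refine apply_eq_zero_of_ne_zero_on_fiber hwt (Λ.add_mem (Λ.add_mem (hxΛ i) (hxΛ i)) (hxΛ j))
    _ hφ (fun d (hdj : d.val j = 1) => ?_) hcj
  have hxi : x i d + x i d = 0 := by
    by_cases hdi : d.val i = 1
    · exact add_self_eq_zero_of_two_ones hwt hxΛ hsupp hji.symm hdi hdj
    · simp [(hsupp i d).not_right.mpr hdi]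
  simpa [hxi] using (hsupp j d).mpr hdj

end Weight

theorem stmt_13_general (r : ℕ) (Λ : AddSubgroup (Col (r + 2) → AddCircle (1 : ℝ)))
    (hwt : ∀ y ∈ Λ, wt y ≤ 2 ^ (r + 1))
    (x : Fin (r + 2) → (Col (r + 2) → AddCircle (1 : ℝ)))
    (hxΛ : ∀ i, x i ∈ Λ)
    -- the support matrix of the matrix with rows `x i` equals `A(r+2)`
    (hsupp : ∀ (i : Fin (r + 2)) (c : Col (r + 2)), x i c ≠ 0 ↔ c.val i = 1) :
    ∀ (i : Fin (r + 2)) (c : Col (r + 2)),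
      x i c = if c.val i = 1 then (((1 : ℝ) / 2 : ℝ) : AddCircle (1 : ℝ)) else 0 := by
  intro i c
  split_ifs with hci
  · exact AddCircle.eq_half_of_add_self_eq_zero (add_self_eq_zero_on_support hwt hxΛ hsupp hci)
      ((hsupp i c).mpr hci)
  · exact (hsupp i c).not_right.mpr hci

theorem stmt_13 (r : ℕ) (Λ : AddSubgroup (Col (r + 2) → AddCircle (1 : ℝ)))
    (hfin : (Λ : Set (Col (r + 2) → AddCircle (1 : ℝ))).Finite)
    (hwt : ∀ y ∈ Λ, wt y ≤ 2 ^ (r + 1))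
    (x : Fin (r + 2) → (Col (r + 2) → AddCircle (1 : ℝ)))
    (hxΛ : ∀ i, x i ∈ Λ)
    -- the support matrix of the matrix with rows `x i` equals `A(r+2)`
    (hsupp : ∀ (i : Fin (r + 2)) (c : Col (r + 2)), x i c ≠ 0 ↔ c.val i = 1) :
    ∀ (i : Fin (r + 2)) (c : Col (r + 2)),
      x i c = if c.val i = 1 then (((1 : ℝ) / 2 : ℝ) : AddCircle (1 : ℝ)) else 0 :=
  stmt_13_general r Λ hwt x hxΛ hsupp
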